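/- Let Γ be a countable discrete group with a measurable action on a measure space (X,ν), and let Y ⊆ X be a domain. Then: (1) Y is a domain of expansion if and only if for every c ∈ (0,1) there exists a finite symmetric subset S ⊆ Γ with 1 ∈ S such that ν((S·A) ∩ Y) > (1+c)·ν(A) for every measurable A ⊆ Y with 0 < ν(A) ≤ ν(Y)/2; and (2) Y is a domain of asymptotic expansion if and only if for every c ∈ (0,1) and every α ∈ (0,1/2] there exists a finite symmetric subset S_α ⊆ Γ with 1 ∈ S_α such that ν((S_α·A) ∩ Y) > (1+c)·ν(A) for every measurable A ⊆ Y with α·ν(Y) ≤ ν(A) ≤ ν(Y)/2. -/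

import Mathlib

open MeasureTheory Set Filter Pointwise

/-- The union `S · A = ⋃ s ∈ S, s • A` of the translates of `A` by elements of the
finite set `S ⊆ Γ`. -/
def finSMul {Γ X : Type*} [Group Γ] [MulAction Γ X] (S : Finset Γ) (A : Set X) : Set X :=
  ⋃ s ∈ S, s • A

/-- `S` is a finite symmetric subset of `Γ` containing the identity. -/
def SymmFin {Γ : Type*} [Group Γ] (S : Finset Γ) : Prop :=
  (1 : Γ) ∈ S ∧ ∀ s ∈ S, s⁻¹ ∈ S

/-- The `S`-boundary `∂_S A = (S·A) \ A`. -/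
def finBdry {Γ X : Type*} [Group Γ] [MulAction Γ X] (S : Finset Γ) (A : Set X) : Set X :=
  finSMul S A \ A

/-- `Y` is a domain of `(c,S)`-expansion: `ν((S·A) ∩ Y) > (1+c)·ν(A)` for every
measurable `A ⊆ Y` with `0 < ν(A) ≤ ν(Y)/2`. -/
def ExpandsOn {Γ X : Type*} [Group Γ] [MulAction Γ X] [MeasurableSpace X]
    (ν : MeasureTheory.Measure X) (Y : Set X) (c : ℝ) (S : Finset Γ) : Prop :=
  ∀ A : Set X, MeasurableSet A → A ⊆ Y → 0 < ν A → ν A ≤ ν Y / 2 →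
    (1 + ENNReal.ofReal c) * ν A < ν (finSMul S A ∩ Y)

/-- `Y` is a domain of expansion: `(c,S)`-expansion for some `c > 0` and some finite
symmetric `S ∋ 1`. -/
def ExpDomain (Γ : Type*) {X : Type*} [Group Γ] [MulAction Γ X] [MeasurableSpace X]
    (ν : MeasureTheory.Measure X) (Y : Set X) : Prop :=
  ∃ c : ℝ, 0 < c ∧ ∃ S : Finset Γ, SymmFin S ∧ ExpandsOn ν Y c S

/-- The `(α,c,S)` asymptotic-expansion estimate on `Y`: `ν((S·A) ∩ Y) > (1+c)·ν(A)` for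
every measurable `A ⊆ Y` with `α·ν(Y) ≤ ν(A) ≤ ν(Y)/2`. -/
def AsymExpandsOn {Γ X : Type*} [Group Γ] [MulAction Γ X] [MeasurableSpace X]
    (ν : MeasureTheory.Measure X) (Y : Set X) (α c : ℝ) (S : Finset Γ) : Prop :=
  ∀ A : Set X, MeasurableSet A → A ⊆ Y → ENNReal.ofReal α * ν Y ≤ ν A → ν A ≤ ν Y / 2 →
    (1 + ENNReal.ofReal c) * ν A < ν (finSMul S A ∩ Y)

/-- `Y` is a domain of asymptotic expansion. -/
def AsymExpDomain (Γ : Type*) {X : Type*} [Group Γ] [MulAction Γ X] [MeasurableSpace X]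
    (ν : MeasureTheory.Measure X) (Y : Set X) : Prop :=
  ∀ α : ℝ, 0 < α → α ≤ 1 / 2 →
    ∃ c : ℝ, 0 < c ∧ ∃ S : Finset Γ, SymmFin S ∧ AsymExpandsOn ν Y α c S

/-- The action of `Γ` on the probability space `(X,ν)` is strongly ergodic: every almost
invariant sequence of measurable sets is asymptotically trivial. -/
def StronglyErgodic (Γ : Type*) {X : Type*} [Group Γ] [MulAction Γ X] [MeasurableSpace X]
    (ν : MeasureTheory.Measure X) : Prop :=
  ∀ C : ℕ → Set X, (∀ n, MeasurableSet (C n)) →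
    (∀ γ : Γ, Filter.Tendsto (fun n => ν (symmDiff (C n) (γ • C n))) Filter.atTop (nhds 0)) →
    Filter.Tendsto (fun n => ν (C n) * (1 - ν (C n))) Filter.atTop (nhds 0)

/-- The action of `Γ` on `(X,ν)` is measure-class-preserving. -/
def MeasClassPres (Γ : Type*) {X : Type*} [Group Γ] [MulAction Γ X] [MeasurableSpace X]
    (ν : MeasureTheory.Measure X) : Prop :=
  ∀ (γ : Γ) (A : Set X), MeasurableSet A → (ν (γ • A) = 0 ↔ ν A = 0)

/-- The action of `Γ` on `(X,ν)` is ergodic: every invariant measurable set is null or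
conull. -/
def ErgodicAct (Γ : Type*) {X : Type*} [Group Γ] [MulAction Γ X] [MeasurableSpace X]
    (ν : MeasureTheory.Measure X) : Prop :=
  ∀ A : Set X, MeasurableSet A → (∀ γ : Γ, γ • A = A) → ν A = 0 ∨ ν Aᶜ = 0

/-- `W` admits an exhaustion by measurable subsets satisfying `P`. -/
def ExhaustionBy {X : Type*} [MeasurableSpace X] (ν : MeasureTheory.Measure X)
    (W : Set X) (P : Set X → Prop) : Prop :=
  ∃ Y : ℕ → Set X, Monotone Y ∧ (∀ n, MeasurableSet (Y n)) ∧ (∀ n, Y n ⊆ W) ∧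
    (∀ n, P (Y n)) ∧ ν (W \ ⋃ n, Y n) = 0

/-! Only the passage from some `c > 0` to an arbitrary `c' < 1` has content; it uses a power
`Sⁿ`. As long as the sets `(Sʲ·A) ∩ Y` carry at most half of `ν(Y)`, each step multiplies their
measure by `1 + c`, so `k` steps with `(1 + c)ᵏ > 1 + c'` suffice. Otherwise some `(Sʲ·A) ∩ Y`
exceeds half of `Y`. Since `S` is symmetric, `(S·(Y \ Sʲ⁺ⁱ⁺¹·A)) ∩ Y ⊆ Y \ Sʲ⁺ⁱ·A`, so the
complements shrink by the factor `1 + c` until they are below `(1 - c')/2 · ν(Y)`, and then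
`ν((Sⁿ·A) ∩ Y) > (1 + c')·ν(A)` because `ν(A) ≤ ν(Y)/2`. In the asymptotic case the expansion
of a complement may be unavailable because it is too small, but after lowering `α` below
`(1 - c')/2` such a complement is already small enough. -/

open scoped ENNReal

theorem SymmFin.pow {Γ : Type*} [Group Γ] [DecidableEq Γ] {S : Finset Γ} (hS : SymmFin S)
    (n : ℕ) : SymmFin (S ^ n) := by
  refine ⟨Finset.one_mem_pow hS.1, fun s hs => ?_⟩
  have hinv : S⁻¹ ⊆ S := fun s hs => by simpa using hS.2 _ (Finset.mem_inv'.mp hs)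
  exact Finset.pow_subset_pow_left hinv (by simpa [inv_pow] using Finset.inv_mem_inv hs)

section Translates

variable {Γ X : Type*} [Group Γ] [MulAction Γ X] {S T : Finset Γ} {A B : Set X}

theorem finSMul_mono (hST : S ⊆ T) (hAB : A ⊆ B) : finSMul S A ⊆ finSMul T B :=
  Set.biUnion_mono hST fun _ _ => Set.smul_set_mono hAB

theorem subset_finSMul (hS : (1 : Γ) ∈ S) (A : Set X) : A ⊆ finSMul S A :=
  fun x hx => Set.mem_biUnion hS (by simpa using hx)

theorem finSMul_finSMul_subset [DecidableEq Γ] (S T : Finset Γ) (A : Set X) :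
    finSMul S (finSMul T A) ⊆ finSMul (S * T) A := by
  simp only [finSMul, Set.smul_set_iUnion₂, Set.iUnion_subset_iff, smul_smul]
  exact fun s hs t ht => Set.subset_biUnion_of_mem (u := fun g => g • A)
    (Finset.mul_mem_mul hs ht)

theorem finSMul_compl_finSMul_subset (hS : ∀ s ∈ S, s⁻¹ ∈ S) (A : Set X) :
    finSMul S (finSMul S A)ᶜ ⊆ Aᶜ := by
  simp only [finSMul, Set.iUnion_subset_iff]
  rintro s hs _ ⟨x, hx, rfl⟩ hsx
  exact hx (Set.mem_biUnion (hS s hs)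
    (Set.mem_smul_set_iff_inv_smul_mem.mpr (by simpa using hsx)))

theorem MeasurableSet.finSMul [MeasurableSpace X] [MeasurableConstSMul Γ X]
    (hA : MeasurableSet A) (S : Finset Γ) : MeasurableSet (_root_.finSMul S A) :=
  .biUnion S.countable_toSet fun s _ => hA.const_smul s

end Translates

section Geometric

variable {M : Type*} [Monoid M] [Preorder M] [MulLeftMono M] {r : M} {f : ℕ → M} {k : ℕ}

theorem pow_mul_le_of_forall_mul_le_succ (h : ∀ n < k, r * f n ≤ f (n + 1)) :
    r ^ k * f 0 ≤ f k := by
  induction k with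
  | zero => simp
  | succ k ih =>
    calc r ^ (k + 1) * f 0 = r * (r ^ k * f 0) := by rw [pow_succ', mul_assoc]
      _ ≤ r * f k := mul_le_mul_right (ih fun n hn => h n (by omega)) r
      _ ≤ f (k + 1) := h k k.lt_succ_self

theorem pow_mul_le_of_forall_mul_succ_le (h : ∀ n < k, r * f (n + 1) ≤ f n) :
    r ^ k * f k ≤ f 0 := by
  induction k with
  | zero => simp
  | succ k ih =>
    calc r ^ (k + 1) * f (k + 1) = r ^ k * (r * f (k + 1)) := by rw [pow_succ, mul_assoc]
      _ ≤ r ^ k * f k := mul_le_mul_right (h k k.lt_succ_self) _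
      _ ≤ f 0 := ih fun n hn => h n (by omega)

end Geometric

section Balls

variable {Γ X : Type*} [Group Γ] [DecidableEq Γ] [MulAction Γ X] {S : Finset Γ}

theorem finSMul_finSMul_pow_inter_subset (S : Finset Γ) (A Y : Set X) (n : ℕ) :
    finSMul S (finSMul (S ^ n) A ∩ Y) ∩ Y ⊆ finSMul (S ^ (n + 1)) A ∩ Y := by
  rw [pow_succ']
  exact Set.inter_subset_inter_left Y
    ((finSMul_mono subset_rfl Set.inter_subset_left).trans (finSMul_finSMul_subset _ _ A))

theorem finSMul_diff_finSMul_pow_subset (hS : ∀ s ∈ S, s⁻¹ ∈ S) (A Y : Set X) (n : ℕ) :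
    finSMul S (Y \ finSMul (S ^ (n + 1)) A) ∩ Y ⊆ Y \ finSMul (S ^ n) A := by
  have hstep : finSMul S (finSMul (S ^ n) A) ⊆ finSMul (S ^ (n + 1)) A := by
    rw [pow_succ']; exact finSMul_finSMul_subset _ _ A
  rintro x ⟨hx, hxY⟩
  refine ⟨hxY, finSMul_compl_finSMul_subset hS _ (finSMul_mono subset_rfl ?_ hx)⟩
  exact fun y hy hyS => hy.2 (hstep hyS)

end Balls

/-- `ExpandsOn ν Y c S` is the case `P = (0 < ·)` and `AsymExpandsOn ν Y α c S` the case
`P = (ENNReal.ofReal α * ν Y ≤ ·)`. -/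
def ExpandsOnSizes {Γ X : Type*} [Group Γ] [MulAction Γ X] [MeasurableSpace X]
    (ν : Measure X) (Y : Set X) (P : ℝ≥0∞ → Prop) (c : ℝ) (S : Finset Γ) : Prop :=
  ∀ A : Set X, MeasurableSet A → A ⊆ Y → P (ν A) → ν A ≤ ν Y / 2 →
    (1 + ENNReal.ofReal c) * ν A < ν (finSMul S A ∩ Y)

theorem lt_measure_of_measure_diff_lt {X : Type*} [MeasurableSpace X] {ν : Measure X}
    {Y A D : Set X} {c : ℝ} (hc0 : 0 ≤ c) (hc1 : c ≤ 1) (hYfin : ν Y ≠ ∞)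
    (hA : ν A ≤ ν Y / 2) (hD : ν (Y \ D) < ENNReal.ofReal ((1 - c) / 2) * ν Y) :
    (1 + ENNReal.ofReal c) * ν A < ν D := by
  have hsplit : ENNReal.ofReal ((1 + c) / 2) + ENNReal.ofReal ((1 - c) / 2) = 1 := by
    rw [← ENNReal.ofReal_add (by linarith) (by linarith),
      show (1 + c) / 2 + (1 - c) / 2 = 1 by ring, ENNReal.ofReal_one]
  have hAY : (1 + ENNReal.ofReal c) * ν A ≤ ENNReal.ofReal ((1 + c) / 2) * ν Y := by
    calc (1 + ENNReal.ofReal c) * ν A ≤ (1 + ENNReal.ofReal c) * (ν Y / 2) :=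
          mul_le_mul_right hA _
      _ = ENNReal.ofReal ((1 + c) / 2) * ν Y := by
          rw [ENNReal.ofReal_div_of_pos two_pos, ENNReal.ofReal_add zero_le_one hc0,
            ENNReal.ofReal_one, ENNReal.ofReal_ofNat, ENNReal.div_eq_inv_mul,
            ENNReal.div_eq_inv_mul]
          ring
  have hsum : (1 + ENNReal.ofReal c) * ν A + ν (Y \ D) < ν Y :=
    calc (1 + ENNReal.ofReal c) * ν A + ν (Y \ D)
        < ENNReal.ofReal ((1 + c) / 2) * ν Y + ENNReal.ofReal ((1 - c) / 2) * ν Y :=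
          ENNReal.add_lt_add_of_le_of_lt (hAY.trans_lt (by finiteness)).ne hAY hD
      _ = ν Y := by rw [← add_mul, hsplit, one_mul]
  calc (1 + ENNReal.ofReal c) * ν A < ν Y - ν (Y \ D) := lt_tsub_iff_right.mpr hsum
    _ ≤ ν (Y \ (Y \ D)) := le_measure_sdiff
    _ ≤ ν D := measure_mono (by rw [Set.sdiff_sdiff_right_self]; exact Set.inter_subset_right)

namespace ExpandsOnSizes

variable {Γ X : Type*} [Group Γ] [DecidableEq Γ] [MulAction Γ X] [MeasurableSpace X]
  [MeasurableConstSMul Γ X] {ν : Measure X} {Y A : Set X} {P : ℝ≥0∞ → Prop} {c c' : ℝ}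
  {S : Finset Γ}

theorem pow_mul_le_measure (h : ExpandsOnSizes ν Y P c S) (hP : Monotone P)
    (hS : (1 : Γ) ∈ S) (hYm : MeasurableSet Y) (hA : MeasurableSet A) (hAY : A ⊆ Y)
    (hPA : P (ν A)) {k : ℕ}
    (hk : ∀ j < k, ν (finSMul (S ^ j) A ∩ Y) ≤ ν Y / 2) :
    (1 + ENNReal.ofReal c) ^ k * ν A ≤ ν (finSMul (S ^ k) A ∩ Y) := by
  have hsub : ∀ n, A ⊆ finSMul (S ^ n) A ∩ Y := fun n =>
    Set.subset_inter (subset_finSMul (Finset.one_mem_pow hS) A) hAY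
  refine (mul_le_mul_right (measure_mono (hsub 0)) _).trans
    (pow_mul_le_of_forall_mul_le_succ (f := fun n => ν (finSMul (S ^ n) A ∩ Y))
      fun n hn => ?_)
  exact (h _ ((hA.finSMul _).inter hYm) Set.inter_subset_right
    (hP (measure_mono (hsub n)) hPA) (hk n hn)).le.trans
    (measure_mono (finSMul_finSMul_pow_inter_subset S A Y n))

theorem pow_mul_measure_diff_le (h : ExpandsOnSizes ν Y P c S) (hS : SymmFin S)
    (hYm : MeasurableSet Y) (hA : MeasurableSet A) {j m : ℕ}
    (hP : ∀ i ≤ m, P (ν (Y \ finSMul (S ^ (j + i)) A)))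
    (hj : ν (Y \ finSMul (S ^ j) A) ≤ ν Y / 2) :
    (1 + ENNReal.ofReal c) ^ m * ν (Y \ finSMul (S ^ (j + m)) A) ≤
      ν (Y \ finSMul (S ^ j) A) := by
  have hanti : ∀ i, Y \ finSMul (S ^ (j + i)) A ⊆ Y \ finSMul (S ^ j) A := fun i =>
    Set.sdiff_subset_sdiff_right
      (finSMul_mono (Finset.pow_subset_pow_right hS.1 (Nat.le_add_right j i)) subset_rfl)
  refine pow_mul_le_of_forall_mul_succ_le (f := fun i => ν (Y \ finSMul (S ^ (j + i)) A))
    fun i hi => ?_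
  exact (h _ (hYm.diff (hA.finSMul _)) Set.sdiff_subset (hP (i + 1) hi)
    ((measure_mono (hanti _)).trans hj)).le.trans
    (measure_mono (finSMul_diff_finSMul_pow_subset hS.2 A Y (j + i)))

theorem exists_measure_diff_pow_lt (h : ExpandsOnSizes ν Y P c S) (hS : SymmFin S)
    {ε : ℝ≥0∞} (hPsmall : ∀ x, ¬ P x → x < ε * ν Y) (hYm : MeasurableSet Y)
    (hY0 : ν Y ≠ 0) (hYfin : ν Y ≠ ∞) (hA : MeasurableSet A) {j m : ℕ}
    (hm : 2⁻¹ < (1 + ENNReal.ofReal c) ^ m * ε) (hj : ν Y / 2 ≤ ν (finSMul (S ^ j) A ∩ Y)) :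
    ∃ i ≤ m, ν (Y \ finSMul (S ^ (j + i)) A) < ε * ν Y := by
  by_cases hPall : ∀ i ≤ m, P (ν (Y \ finSMul (S ^ (j + i)) A))
  · have hj' : ν (Y \ finSMul (S ^ j) A) ≤ ν Y / 2 := by
      rw [← Set.sdiff_inter_self_eq_sdiff, measure_sdiff Set.inter_subset_right
        ((hA.finSMul _).inter hYm).nullMeasurableSet
        (ne_top_of_le_ne_top hYfin (measure_mono Set.inter_subset_right))]
      exact (tsub_le_tsub_left hj _).trans (ENNReal.sub_half hYfin).le
    have hshrink := h.pow_mul_measure_diff_le hS hYm hA hPall hj'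
    refine ⟨m, le_rfl, lt_of_not_ge fun hge => lt_irrefl (ν Y / 2) ?_⟩
    calc ν Y / 2 = 2⁻¹ * ν Y := ENNReal.div_eq_inv_mul
      _ < (1 + ENNReal.ofReal c) ^ m * ε * ν Y := ENNReal.mul_lt_mul_left hY0 hYfin hm
      _ ≤ (1 + ENNReal.ofReal c) ^ m * ν (Y \ finSMul (S ^ (j + m)) A) := by
        rw [mul_assoc]; exact mul_le_mul_right hge _
      _ ≤ ν Y / 2 := hshrink.trans hj'
  · push Not at hPall
    obtain ⟨i, him, hi⟩ := hPall
    exact ⟨i, him, hPsmall _ hi⟩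

theorem exists_pow (h : ExpandsOnSizes ν Y P c S) (hS : SymmFin S) (hc : 0 < c)
    (hc'0 : 0 ≤ c') (hc'1 : c' < 1) (hP : Monotone P) (hPpos : ∀ x, P x → 0 < x)
    (hPsmall : ∀ x, ¬ P x → x < ENNReal.ofReal ((1 - c') / 2) * ν Y)
    (hYm : MeasurableSet Y) (hY0 : ν Y ≠ 0) (hYfin : ν Y ≠ ∞) :
    ∃ n, ExpandsOnSizes ν Y P c' (S ^ n) := by
  set ε := ENNReal.ofReal ((1 - c') / 2)
  have hpow : Tendsto (fun n : ℕ => (1 + ENNReal.ofReal c) ^ n) atTop (nhds ∞) :=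
    ENNReal.tendsto_pow_atTop_nhds_top_iff.mpr
      (ENNReal.lt_add_right ENNReal.one_ne_top (ENNReal.ofReal_pos.mpr hc).ne')
  obtain ⟨k, hk⟩ :=
    (hpow.eventually_const_lt (by finiteness : 1 + ENNReal.ofReal c' < ∞)).exists
  have hε : ε ≠ 0 := (ENNReal.ofReal_pos.mpr (by linarith)).ne'
  have hpowε := ENNReal.Tendsto.mul_const hpow (Or.inr ENNReal.ofReal_ne_top : _ ∨ ε ≠ ∞)
  obtain ⟨m, hm⟩ := (hpowε.eventually_const_lt
    (by rw [ENNReal.top_mul hε]; finiteness : (2 : ℝ≥0∞)⁻¹ < ∞ * ε)).exists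
  refine ⟨k + m, fun A hA hAY hPA hA2 => ?_⟩
  suffices ∃ n ≤ k + m, (1 + ENNReal.ofReal c') * ν A < ν (finSMul (S ^ n) A ∩ Y) by
    obtain ⟨n, hn, hlt⟩ := this
    exact hlt.trans_le (measure_mono (Set.inter_subset_inter_left Y
      (finSMul_mono (Finset.pow_subset_pow_right hS.1 hn) subset_rfl)))
  by_cases hgrow : ∀ j < k, ν (finSMul (S ^ j) A ∩ Y) ≤ ν Y / 2
  · refine ⟨k, Nat.le_add_right k m, ?_⟩
    calc (1 + ENNReal.ofReal c') * ν A < (1 + ENNReal.ofReal c) ^ k * ν A :=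
          ENNReal.mul_lt_mul_left (hPpos _ hPA).ne' (ne_top_of_le_ne_top (by finiteness) hA2) hk
      _ ≤ ν (finSMul (S ^ k) A ∩ Y) := h.pow_mul_le_measure hP hS.1 hYm hA hAY hPA hgrow
  push Not at hgrow
  obtain ⟨j, hjk, hj⟩ := hgrow
  obtain ⟨i, him, hi⟩ := h.exists_measure_diff_pow_lt hS hPsmall hYm hY0 hYfin hA hm hj.le
  refine ⟨j + i, by omega, lt_measure_of_measure_diff_lt hc'0 hc'1.le hYfin hA2 ?_⟩
  rwa [Set.sdiff_inter_self_eq_sdiff]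

end ExpandsOnSizes

section Domains

variable {Γ X : Type*} [Group Γ] [MulAction Γ X] [MeasurableSpace X]
  [MeasurableConstSMul Γ X] {ν : Measure X} {Y : Set X}

theorem expDomain_iff_forall_lt_one (hYm : MeasurableSet Y) (hY0 : ν Y ≠ 0)
    (hYfin : ν Y ≠ ∞) :
    ExpDomain Γ ν Y ↔
      ∀ c : ℝ, 0 < c → c < 1 → ∃ S : Finset Γ, SymmFin S ∧ ExpandsOn ν Y c S := by
  classical
  refine ⟨fun ⟨c, hc, S, hS, h⟩ c' hc'0 hc'1 => ?_, fun h => ?_⟩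
  · have hPsmall (x : ℝ≥0∞) (hx : ¬ 0 < x) : x < ENNReal.ofReal ((1 - c') / 2) * ν Y := by
      rw [not_lt, nonpos_iff_eq_zero] at hx
      exact hx ▸ ENNReal.mul_pos (ENNReal.ofReal_pos.mpr (by linarith)).ne' hY0
    obtain ⟨n, hn⟩ := ExpandsOnSizes.exists_pow (P := (0 < ·)) h hS hc hc'0.le hc'1
      (fun _ _ hxy hx => hx.trans_le hxy) (fun _ hx => hx) hPsmall hYm hY0 hYfin
    exact ⟨S ^ n, hS.pow n, hn⟩
  · obtain ⟨S, hS, h⟩ := h (1 / 2) (by norm_num) (by norm_num)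
    exact ⟨1 / 2, by norm_num, S, hS, h⟩

theorem asymExpDomain_iff_forall_lt_one (hYm : MeasurableSet Y) (hY0 : ν Y ≠ 0)
    (hYfin : ν Y ≠ ∞) :
    AsymExpDomain Γ ν Y ↔ ∀ c : ℝ, 0 < c → c < 1 → ∀ α : ℝ, 0 < α → α ≤ 1 / 2 →
      ∃ S : Finset Γ, SymmFin S ∧ AsymExpandsOn ν Y α c S := by
  classical
  refine ⟨fun h c' hc'0 hc'1 α hα0 hα2 => ?_, fun h α hα0 hα2 => ?_⟩
  · set α₀ := min α ((1 - c') / 2)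
    obtain ⟨c, hc, S, hS, h⟩ := h α₀ (lt_min hα0 (by linarith)) ((min_le_left _ _).trans hα2)
    obtain ⟨n, hn⟩ := ExpandsOnSizes.exists_pow (P := (ENNReal.ofReal α₀ * ν Y ≤ ·)) h hS
      hc hc'0.le hc'1 (fun _ _ hxy hx => hx.trans hxy)
      (fun _ hx => (ENNReal.mul_pos (ENNReal.ofReal_pos.mpr (lt_min hα0 (by linarith))).ne'
        hY0).trans_le hx)
      (fun _ hx => (not_le.mp hx).trans_le
        (mul_le_mul_left (ENNReal.ofReal_le_ofReal (min_le_right _ _)) _))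
      hYm hY0 hYfin
    refine ⟨S ^ n, hS.pow n, fun A hA hAY hαA hA2 => hn A hA hAY ?_ hA2⟩
    exact (mul_le_mul_left (ENNReal.ofReal_le_ofReal (min_le_left _ _)) _).trans hαA
  · obtain ⟨S, hS, h⟩ := h (1 / 2) (by norm_num) (by norm_num) α hα0 hα2
    exact ⟨1 / 2, by norm_num, S, hS, h⟩

end Domains

theorem expDomain_and_asymExpDomain_arbitrary_constant_general
    {Γ X : Type*} [Group Γ] [MulAction Γ X] [MeasurableSpace X]
    (ν : Measure X)
    (hmeas : ∀ γ : Γ, Measurable fun x : X => γ • x)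
    (Y : Set X) (hYm : MeasurableSet Y) (hY0 : 0 < ν Y) (hYfin : ν Y < ⊤) :
    (ExpDomain Γ ν Y ↔
      ∀ c : ℝ, 0 < c → c < 1 → ∃ S : Finset Γ, SymmFin S ∧ ExpandsOn ν Y c S) ∧
    (AsymExpDomain Γ ν Y ↔
      ∀ c : ℝ, 0 < c → c < 1 → ∀ α : ℝ, 0 < α → α ≤ 1 / 2 →
        ∃ S : Finset Γ, SymmFin S ∧ AsymExpandsOn ν Y α c S) := by
  have : MeasurableConstSMul Γ X := ⟨hmeas⟩
  exact ⟨expDomain_iff_forall_lt_one hYm hY0.ne' hYfin.ne,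
    asymExpDomain_iff_forall_lt_one hYm hY0.ne' hYfin.ne⟩

/-- Lemma 3.9: for a domain `Y`, (1) `Y` is a domain of expansion iff
for every `c ∈ (0,1)` it is a domain of `(c,S)`-expansion for some finite symmetric
`S ∋ 1`, and (2) `Y` is a domain of asymptotic expansion iff for every `c ∈ (0,1)` and
every `α ∈ (0,1/2]` the `(α,c)` asymptotic-expansion estimate holds for some such `S`. -/
theorem expDomain_and_asymExpDomain_arbitrary_constant
    {Γ X : Type*} [Group Γ] [Countable Γ] [MulAction Γ X] [MeasurableSpace X]
    (ν : Measure X)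
    (hmeas : ∀ γ : Γ, Measurable fun x : X => γ • x)
    (Y : Set X) (hYm : MeasurableSet Y) (hY0 : 0 < ν Y) (hYfin : ν Y < ⊤) :
    (ExpDomain Γ ν Y ↔
      ∀ c : ℝ, 0 < c → c < 1 → ∃ S : Finset Γ, SymmFin S ∧ ExpandsOn ν Y c S) ∧
    (AsymExpDomain Γ ν Y ↔
      ∀ c : ℝ, 0 < c → c < 1 → ∀ α : ℝ, 0 < α → α ≤ 1 / 2 →
        ∃ S : Finset Γ, SymmFin S ∧ AsymExpandsOn ν Y α c S) :=
  expDomain_and_asymExpDomain_arbitrary_constant_general ν hmeas Y hYm hY0 hYfin
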